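/- arXiv:2103.10182 — 3 statements merged into one kernel-verified Lean document; each statement's English description precedes it below -/
import Mathlib

section
/- The Bayesian inverse problem with Gaussian likelihood is weakly well-posed: if (y_n) is a sequence in ℝ^p converging to y, then for every bounded continuous function f : ℝ^m → ℝ one has ∫ f(z) dπ_{y_n}(z) → ∫ f(z) dπ_y(z) as n → ∞; that is, the posterior measures π_{y_n} converge weakly to π_y. -/
open Real MeasureTheory Filter

/-!
For fixed `z` the Gaussian likelihood `L(y, z)` is continuous in `y` and bounded by the
normalising constant `(2πσ²)^(-p/2)`, so by dominated convergence (the prior being finite) both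
`y ↦ ∫ f(z) L(y, z) dP(z)` and the evidence `y ↦ Z(y)` are continuous. Since `Z(y) > 0`, their
quotient `y ↦ ∫ f dπ_y` is continuous as well.
-/

section Posterior

variable {X Y : Type*} [MeasurableSpace X]

noncomputable def posterior (P : Measure X) (ℓ : X → ℝ) : Measure X :=
  P.withDensity fun z => ENNReal.ofReal (ℓ z / ∫ x, ℓ x ∂P)

theorem integral_withDensity_ofReal_div (P : Measure X) {g : X → ℝ} (hg : Measurable g)
    (hg₀ : ∀ z, 0 ≤ g z) {c : ℝ} (hc : 0 ≤ c) (f : X → ℝ) :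
    ∫ z, f z ∂P.withDensity (fun z => ENNReal.ofReal (g z / c)) =
      (∫ z, f z * g z ∂P) / c := by
  have hdens : Measurable fun z => (g z / c).toNNReal := (hg.div_const c).real_toNNReal
  rw [← integral_div]
  refine (integral_withDensity_eq_integral_smul hdens f).trans (integral_congr_ae ?_)
  filter_upwards with z
  rw [NNReal.smul_def, smul_eq_mul, Real.coe_toNNReal _ (div_nonneg (hg₀ z) hc)]
  ring

theorem integral_pos_of_forall_pos {P : Measure X} [NeZero P] {g : X → ℝ} (hg : Integrable g P)
    (hpos : ∀ z, 0 < g z) : 0 < ∫ z, g z ∂P := by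
  have hsupp : Function.support g = Set.univ := Set.eq_univ_of_forall fun z => (hpos z).ne'
  rw [integral_pos_iff_support_of_nonneg (fun z => (hpos z).le) hg, hsupp,
    Measure.measure_univ_pos]
  exact NeZero.ne P

variable [TopologicalSpace Y] [FirstCountableTopology Y] {P : Measure X} [IsFiniteMeasure P]

theorem continuous_integral_of_forall_abs_le {F : Y → X → ℝ} {c : ℝ}
    (hmeas : ∀ y, AEStronglyMeasurable (F y) P) (hle : ∀ y z, |F y z| ≤ c)
    (hcont : ∀ z, Continuous fun y => F y z) :
    Continuous fun y => ∫ z, F y z ∂P :=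
  continuous_of_dominated hmeas (fun y => ae_of_all _ (hle y)) (integrable_const c)
    (ae_of_all _ hcont)

theorem continuous_integral_posterior [NeZero P] {ℓ : Y → X → ℝ} {c : ℝ}
    (hmeas : ∀ y, Measurable (ℓ y)) (hpos : ∀ y z, 0 < ℓ y z) (hle : ∀ y z, ℓ y z ≤ c)
    (hcont : ∀ z, Continuous fun y => ℓ y z) {f : X → ℝ} (hf : AEStronglyMeasurable f P)
    {C : ℝ} (hfC : ∀ z, |f z| ≤ C) :
    Continuous fun y => ∫ z, f z ∂posterior P (ℓ y) := by
  have habs : ∀ y z, |ℓ y z| ≤ c := fun y z => (abs_of_pos (hpos y z)).trans_le (hle y z)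
  have hevidence_pos : ∀ y, 0 < ∫ z, ℓ y z ∂P := fun y =>
    integral_pos_of_forall_pos
      ((integrable_const c).mono' (hmeas y).aestronglyMeasurable (ae_of_all _ (habs y)))
      (hpos y)
  have hevidence : Continuous fun y => ∫ z, ℓ y z ∂P :=
    continuous_integral_of_forall_abs_le (fun y => (hmeas y).aestronglyMeasurable) habs hcont
  have hnumerator : Continuous fun y => ∫ z, f z * ℓ y z ∂P :=
    continuous_integral_of_forall_abs_le (c := C * c)
      (fun y => hf.mul (hmeas y).aestronglyMeasurable)
      (fun y z => abs_mul (f z) (ℓ y z) ▸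
        mul_le_mul (hfC z) (habs y z) (abs_nonneg _) ((abs_nonneg _).trans (hfC z)))
      (fun z => continuous_const.mul (hcont z))
  simp only [posterior, integral_withDensity_ofReal_div P (hmeas _) (fun z => (hpos _ z).le)
    (hevidence_pos _).le]
  exact hnumerator.div hevidence fun y => (hevidence_pos y).ne'

end Posterior

section Gaussian

variable {X F : Type*} [NormedAddCommGroup F]

noncomputable def gaussianLikelihood (p : ℕ) (σ : ℝ) (G : X → F) (y : F) (z : X) : ℝ :=
  (2 * π * σ ^ 2) ^ (-(p : ℝ) / 2) * exp (-(‖y - G z‖ ^ 2 / (2 * σ ^ 2)))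

variable {p : ℕ} {σ : ℝ} {G : X → F}

theorem gaussianLikelihood_pos (hσ : 0 < σ) (y : F) (z : X) :
    0 < gaussianLikelihood p σ G y z :=
  mul_pos (rpow_pos_of_pos (by positivity) _) (exp_pos _)

theorem gaussianLikelihood_le (y : F) (z : X) :
    gaussianLikelihood p σ G y z ≤ (2 * π * σ ^ 2) ^ (-(p : ℝ) / 2) := by
  refine mul_le_of_le_one_right (rpow_nonneg (by positivity) _) (exp_le_one_iff.mpr ?_)
  rw [neg_nonpos]
  positivity

theorem continuous_gaussianLikelihood_left (z : X) :
    Continuous fun y => gaussianLikelihood p σ G y z := by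
  unfold gaussianLikelihood
  fun_prop

theorem continuous_gaussianLikelihood_right [TopologicalSpace X] (hG : Continuous G) (y : F) :
    Continuous (gaussianLikelihood p σ G y) := by
  unfold gaussianLikelihood
  fun_prop

end Gaussian

theorem posterior_weak_wellposed_general
    (m d p : ℕ)
    (μθ : EuclideanSpace ℝ (Fin m) → EuclideanSpace ℝ (Fin d))
    (L : ℝ)
    (hLip : ∀ z z', ‖μθ z - μθ z'‖ ≤ L * ‖z - z'‖)
    (A : EuclideanSpace ℝ (Fin d) →L[ℝ] EuclideanSpace ℝ (Fin p))
    (σ : ℝ) (hσ : 0 < σ)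
    (Φ : EuclideanSpace ℝ (Fin m) → EuclideanSpace ℝ (Fin p) → ℝ)
    (hΦ : ∀ z y, Φ z y = ‖y - A (μθ z)‖ ^ 2 / (2 * σ ^ 2))
    (Lik : EuclideanSpace ℝ (Fin p) → EuclideanSpace ℝ (Fin m) → ℝ)
    (hLik : ∀ y z, Lik y z = (2 * π * σ ^ 2) ^ (-(p : ℝ) / 2) * Real.exp (-(Φ z y)))
    (P : Measure (EuclideanSpace ℝ (Fin m))) [IsProbabilityMeasure P]
    (Z : EuclideanSpace ℝ (Fin p) → ℝ)
    (hZ : ∀ y, Z y = ∫ z, Lik y z ∂P)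
    (post : EuclideanSpace ℝ (Fin p) → Measure (EuclideanSpace ℝ (Fin m)))
    (hpost : ∀ y, post y = P.withDensity (fun z => ENNReal.ofReal (Lik y z / Z y)))
    (y : EuclideanSpace ℝ (Fin p)) (yn : ℕ → EuclideanSpace ℝ (Fin p))
    (hyn : Tendsto yn atTop (nhds y)) :
    ∀ f : EuclideanSpace ℝ (Fin m) → ℝ, Continuous f → (∃ C, ∀ z, |f z| ≤ C) →
      Tendsto (fun n => ∫ z, f z ∂(post (yn n))) atTop (nhds (∫ z, f z ∂(post y))) := by
  rintro f hf ⟨C, hC⟩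
  have hμθ : Continuous μθ :=
    (LipschitzWith.of_dist_le' (K := L) (by simpa only [dist_eq_norm] using hLip)).continuous
  have hLik_eq : Lik = gaussianLikelihood p σ (A ∘ μθ) := by
    funext y z
    rw [hLik, hΦ, gaussianLikelihood, Function.comp_apply]
  have hpost_eq : post = fun y => posterior P (Lik y) := funext fun y => by
    rw [hpost, hZ, posterior]
  subst hLik_eq hpost_eq
  have hmeas : ∀ y, Measurable (gaussianLikelihood p σ (A ∘ μθ) y) := fun y =>
    (continuous_gaussianLikelihood_right (A.continuous.comp hμθ) y).measurable
  exact ((continuous_integral_posterior hmeas (gaussianLikelihood_pos hσ) gaussianLikelihood_le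
    continuous_gaussianLikelihood_left hf.aestronglyMeasurable hC).tendsto y).comp hyn

/-- Weak well-posedness: if `y_n → y` then for every bounded continuous
`f : ℝ^m → ℝ`, `∫ f dπ_{y_n} → ∫ f dπ_y`, where `π_y` is the probability measure with
density `z ↦ L(y, z)/Z(y)` with respect to the prior `P`. -/
theorem posterior_weak_wellposed
    (m d p : ℕ) (hm : 0 < m) (hd : 0 < d) (hp : 0 < p)
    (μθ : EuclideanSpace ℝ (Fin m) → EuclideanSpace ℝ (Fin d))
    (L : ℝ) (hL : 0 ≤ L)
    (hLip : ∀ z z', ‖μθ z - μθ z'‖ ≤ L * ‖z - z'‖)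
    (A : EuclideanSpace ℝ (Fin d) →L[ℝ] EuclideanSpace ℝ (Fin p))
    (σ : ℝ) (hσ : 0 < σ)
    (Φ : EuclideanSpace ℝ (Fin m) → EuclideanSpace ℝ (Fin p) → ℝ)
    (hΦ : ∀ z y, Φ z y = ‖y - A (μθ z)‖ ^ 2 / (2 * σ ^ 2))
    (Lik : EuclideanSpace ℝ (Fin p) → EuclideanSpace ℝ (Fin m) → ℝ)
    (hLik : ∀ y z, Lik y z = (2 * π * σ ^ 2) ^ (-(p : ℝ) / 2) * Real.exp (-(Φ z y)))
    (P : Measure (EuclideanSpace ℝ (Fin m))) [IsProbabilityMeasure P]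
    (Z : EuclideanSpace ℝ (Fin p) → ℝ)
    (hZ : ∀ y, Z y = ∫ z, Lik y z ∂P)
    (post : EuclideanSpace ℝ (Fin p) → Measure (EuclideanSpace ℝ (Fin m)))
    (hpost : ∀ y, post y = P.withDensity (fun z => ENNReal.ofReal (Lik y z / Z y)))
    (y : EuclideanSpace ℝ (Fin p)) (yn : ℕ → EuclideanSpace ℝ (Fin p))
    (hyn : Tendsto yn atTop (nhds y)) :
    ∀ f : EuclideanSpace ℝ (Fin m) → ℝ, Continuous f → (∃ C, ∀ z, |f z| ≤ C) →
      Tendsto (fun n => ∫ z, f z ∂(post (yn n))) atTop (nhds (∫ z, f z ∂(post y))) :=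
  posterior_weak_wellposed_general m d p μθ L hLip A σ hσ Φ hΦ Lik hLik P Z hZ post hpost y yn hyn
end

section
/- The Bayesian inverse problem with Gaussian likelihood is well-posed in the Hellinger sense: if (y_n) is a sequence in ℝ^p converging to y, then the squared Hellinger distance between the posteriors tends to zero, i.e. ∫ ( √(L(y_n, z)/Z(y_n)) − √(L(y, z)/Z(y)) )² dP(z) → 0 as n → ∞. -/
open Real MeasureTheory Filter Topology

/-!
The likelihood is bounded by its normalising constant and depends continuously on the data, so by
dominated convergence the positive evidence `Z` is continuous. Near the limit datum the
posterior densities `L / Z` are therefore uniformly bounded, and since `(√a - √b)² ≤ a + b` a second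
application of dominated convergence shows that the Hellinger integral is continuous in the first
datum, and it vanishes when both data agree.
-/

theorem sq_sqrt_sub_sqrt_le_add {a b : ℝ} (ha : 0 ≤ a) (hb : 0 ≤ b) : (√a - √b) ^ 2 ≤ a + b := by
  nlinarith [sq_sqrt ha, sq_sqrt hb, mul_nonneg (sqrt_nonneg a) (sqrt_nonneg b)]

theorem integral_pos_of_forall_pos_s6 {α : Type*} [MeasurableSpace α] {μ : Measure α} [NeZero μ]
    {f : α → ℝ} (hfi : Integrable f μ) (hf : ∀ x, 0 < f x) : 0 < ∫ x, f x ∂μ := by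
  rw [integral_pos_iff_support_of_nonneg (fun x => (hf x).le) hfi,
    Function.support_eq_univ fun x => (hf x).ne']
  exact Measure.measure_univ_pos.mpr (NeZero.ne μ)

section Hellinger

variable {Y X : Type*} [TopologicalSpace Y] [FirstCountableTopology Y] [MeasurableSpace X] {P : Measure X} [IsFiniteMeasure P]
  {ℓ : Y → X → ℝ} {C : ℝ} {y₀ : Y}

theorem tendsto_integral_sq_sub_sqrt_normalized
    (hmeas : ∀ y, AEStronglyMeasurable (ℓ y) P) (hnonneg : ∀ y x, 0 ≤ ℓ y x)
    (hle : ∀ y x, ℓ y x ≤ C) (hcont : ∀ x, ContinuousAt (fun y => ℓ y x) y₀)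
    (hZ₀ : 0 < ∫ x, ℓ y₀ x ∂P) :
    Tendsto (fun y => ∫ x,
        (√(ℓ y x / ∫ x', ℓ y x' ∂P) - √(ℓ y₀ x / ∫ x', ℓ y₀ x' ∂P)) ^ 2 ∂P)
      (𝓝 y₀) (𝓝 0) := by
  set Z : Y → ℝ := fun y => ∫ x, ℓ y x ∂P
  have hZ_cont : ContinuousAt Z y₀ :=
    continuousAt_of_dominated (.of_forall hmeas)
      (.of_forall fun y => .of_forall fun x => by
        rw [norm_of_nonneg (hnonneg y x)]; exact hle y x)
      (integrable_const C) (.of_forall hcont)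
  have hZ_near : ∀ᶠ y in 𝓝 y₀, Z y₀ / 2 < Z y := hZ_cont.eventually (lt_mem_nhds (half_lt_self hZ₀))
  have hdensity_le : ∀ y, Z y₀ / 2 < Z y → ∀ x, ℓ y x / Z y ≤ C / (Z y₀ / 2) := fun y hy x =>
    div_le_div₀ ((hnonneg y x).trans (hle y x)) (hle y x) (half_pos hZ₀) hy.le
  have hcont_integral : ContinuousAt
      (fun y => ∫ x, (√(ℓ y x / Z y) - √(ℓ y₀ x / Z y₀)) ^ 2 ∂P) y₀ := by
    refine continuousAt_of_dominated (bound := fun _ => C / (Z y₀ / 2) + C / (Z y₀ / 2))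
      (.of_forall fun y => ?_) (hZ_near.mono fun y hy => .of_forall fun x => ?_)
      (integrable_const _) (.of_forall fun x => ?_)
    · exact Continuous.comp_aestronglyMeasurable₂ (g := fun a b => (√(a / Z y) - √(b / Z y₀)) ^ 2)
        (by fun_prop) (hmeas y) (hmeas y₀)
    · have hZy : 0 < Z y := (half_pos hZ₀).trans hy
      rw [norm_of_nonneg (sq_nonneg _)]
      exact (sq_sqrt_sub_sqrt_le_add (div_nonneg (hnonneg y x) hZy.le)
        (div_nonneg (hnonneg y₀ x) hZ₀.le)).trans
        (add_le_add (hdensity_le y hy x) (hdensity_le y₀ (half_lt_self hZ₀) x))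
    · exact (((hcont x).div hZ_cont hZ₀.ne').sqrt.sub continuousAt_const).pow 2
  simpa using hcont_integral.tendsto

end Hellinger

theorem posterior_hellinger_wellposed_general
    (m d p : ℕ)
    (μθ : EuclideanSpace ℝ (Fin m) → EuclideanSpace ℝ (Fin d))
    (L : ℝ)
    (hLip : ∀ z z', ‖μθ z - μθ z'‖ ≤ L * ‖z - z'‖)
    (A : EuclideanSpace ℝ (Fin d) →L[ℝ] EuclideanSpace ℝ (Fin p))
    (σ : ℝ) (hσ : 0 < σ)
    (Φ : EuclideanSpace ℝ (Fin m) → EuclideanSpace ℝ (Fin p) → ℝ)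
    (hΦ : ∀ z y, Φ z y = ‖y - A (μθ z)‖ ^ 2 / (2 * σ ^ 2))
    (Lik : EuclideanSpace ℝ (Fin p) → EuclideanSpace ℝ (Fin m) → ℝ)
    (hLik : ∀ y z, Lik y z = (2 * π * σ ^ 2) ^ (-(p : ℝ) / 2) * Real.exp (-(Φ z y)))
    (P : Measure (EuclideanSpace ℝ (Fin m))) [IsProbabilityMeasure P]
    (Z : EuclideanSpace ℝ (Fin p) → ℝ)
    (hZ : ∀ y, Z y = ∫ z, Lik y z ∂P)
    (y : EuclideanSpace ℝ (Fin p)) (yn : ℕ → EuclideanSpace ℝ (Fin p))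
    (hyn : Tendsto yn atTop (nhds y)) :
    Tendsto
      (fun n => ∫ z,
        (Real.sqrt (Lik (yn n) z / Z (yn n)) - Real.sqrt (Lik y z / Z y)) ^ 2 ∂P)
      atTop (nhds 0) := by
  set c : ℝ := (2 * π * σ ^ 2) ^ (-(p : ℝ) / 2)
  have hμθ : Continuous μθ :=
    (LipschitzWith.of_dist_le' fun z z' => by simpa only [dist_eq_norm] using hLip z z').continuous
  have hLik_cont : Continuous fun q : EuclideanSpace ℝ (Fin p) × EuclideanSpace ℝ (Fin m) =>
      Lik q.1 q.2 := by
    simp only [hLik, hΦ]; fun_prop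
  have hLik_pos : ∀ y z, 0 < Lik y z := fun y z => by rw [hLik]; positivity
  have hLik_le : ∀ y z, Lik y z ≤ c := fun y z => by
    rw [hLik, hΦ]
    exact mul_le_of_le_one_right (rpow_pos_of_pos (by positivity) _).le
      (exp_le_one_iff.mpr (neg_nonpos.mpr (by positivity)))
  have hLik_meas : ∀ y, AEStronglyMeasurable (Lik y) P := fun y =>
    (hLik_cont.comp (.prodMk_right y)).aestronglyMeasurable
  have hZ_pos : 0 < ∫ z, Lik y z ∂P := integral_pos_of_forall_pos_s6
    (.of_bound (hLik_meas y) c (.of_forall fun z => by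
      rw [norm_of_nonneg (hLik_pos y z).le]; exact hLik_le y z))
    (hLik_pos y)
  simp only [hZ]
  exact (tendsto_integral_sq_sub_sqrt_normalized hLik_meas (fun y z => (hLik_pos y z).le) hLik_le
    (fun z => (hLik_cont.comp (.prodMk_left z)).continuousAt) hZ_pos).comp hyn

/-- Hellinger well-posedness: if `y_n → y` then the squared Hellinger
distance between the posteriors tends to zero:
`∫ (√(L(y_n, z)/Z(y_n)) − √(L(y, z)/Z(y)))² dP(z) → 0`. -/
theorem posterior_hellinger_wellposed
    (m d p : ℕ) (hm : 0 < m) (hd : 0 < d) (hp : 0 < p)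
    (μθ : EuclideanSpace ℝ (Fin m) → EuclideanSpace ℝ (Fin d))
    (L : ℝ) (hL : 0 ≤ L)
    (hLip : ∀ z z', ‖μθ z - μθ z'‖ ≤ L * ‖z - z'‖)
    (A : EuclideanSpace ℝ (Fin d) →L[ℝ] EuclideanSpace ℝ (Fin p))
    (σ : ℝ) (hσ : 0 < σ)
    (Φ : EuclideanSpace ℝ (Fin m) → EuclideanSpace ℝ (Fin p) → ℝ)
    (hΦ : ∀ z y, Φ z y = ‖y - A (μθ z)‖ ^ 2 / (2 * σ ^ 2))
    (Lik : EuclideanSpace ℝ (Fin p) → EuclideanSpace ℝ (Fin m) → ℝ)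
    (hLik : ∀ y z, Lik y z = (2 * π * σ ^ 2) ^ (-(p : ℝ) / 2) * Real.exp (-(Φ z y)))
    (P : Measure (EuclideanSpace ℝ (Fin m))) [IsProbabilityMeasure P]
    (Z : EuclideanSpace ℝ (Fin p) → ℝ)
    (hZ : ∀ y, Z y = ∫ z, Lik y z ∂P)
    (y : EuclideanSpace ℝ (Fin p)) (yn : ℕ → EuclideanSpace ℝ (Fin p))
    (hyn : Tendsto yn atTop (nhds y)) :
    Tendsto
      (fun n => ∫ z,
        (Real.sqrt (Lik (yn n) z / Z (yn n)) - Real.sqrt (Lik y z / Z y)) ^ 2 ∂P)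
      atTop (nhds 0) :=
  posterior_hellinger_wellposed_general m d p μθ L hLip A σ hσ Φ hΦ Lik hLik P Z hZ y yn hyn
end

section
/- If the prior P has finite first moment, i.e. ∫ ‖z‖ dP(z) < ∞, then the posterior mean of the reconstructed image is a well-posed estimator: the map y ↦ ∫ μθ(z) dπ_y(z) from ℝ^p to ℝ^d is continuous. -/
open Real MeasureTheory Filter

/-! The posterior mean is `(∫ Lik y z • μθ z ∂P) / Z y`. The Gaussian likelihood is continuous in
`y` and bounded by `(2πσ²)^(-p/2)`, and a Lipschitz `μθ` grows at most linearly, so it is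
`P`-integrable when `P` has a finite first moment. Dominated convergence then makes numerator and
evidence continuous in `y`, and the evidence is positive. -/

theorem LipschitzWith.integrable_of_integrable_id {X E : Type*} [NormedAddCommGroup X]
    [MeasurableSpace X] [OpensMeasurableSpace X] [NormedAddCommGroup E]
    [SecondCountableTopologyEither X E] {P : Measure X} [IsFiniteMeasure P] {K : NNReal} {f : X → E}
    (hf : LipschitzWith K f) (hP : Integrable id P) : Integrable f P := by
  have hbound : ∀ x, ‖f x‖ ≤ ‖f 0‖ + K * ‖x‖ := fun x => by
    calc ‖f x‖ ≤ ‖f 0‖ + ‖f x - f 0‖ := norm_le_norm_add_norm_sub' _ _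
      _ ≤ ‖f 0‖ + K * ‖x‖ := by
        gcongr; simpa only [dist_eq_norm, sub_zero] using hf.dist_le_mul x 0
  exact ((integrable_const _).add (hP.norm.const_mul _)).mono'
    hf.continuous.aestronglyMeasurable (Eventually.of_forall hbound)

section WeightedIntegrals

variable {X Y E : Type*} [MeasurableSpace X] [NormedAddCommGroup E] [NormedSpace ℝ E]
  {P : Measure X}

theorem integral_withDensity_ofReal_div_s8 {w : X → ℝ} (hw : Measurable w) (hw_nonneg : ∀ x, 0 ≤ w x)
    {c : ℝ} (hc : 0 ≤ c) (g : X → E) :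
    ∫ x, g x ∂P.withDensity (fun x => ENNReal.ofReal (w x / c)) = c⁻¹ • ∫ x, w x • g x ∂P := by
  rw [integral_withDensity_eq_integral_toReal_smul (hw.div_const c).ennreal_ofReal
    (Eventually.of_forall fun _ => ENNReal.ofReal_lt_top), ← integral_smul]
  congr 1 with x
  rw [ENNReal.toReal_ofReal (div_nonneg (hw_nonneg x) hc), smul_smul, div_eq_inv_mul]

theorem integral_pos_of_forall_pos_s8 [NeZero P] {w : X → ℝ} (hw : Integrable w P)
    (hw_pos : ∀ x, 0 < w x) : 0 < ∫ x, w x ∂P := by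
  have hsupp : Function.support w = Set.univ :=
    Set.eq_univ_of_forall fun x => (hw_pos x).ne'
  rw [integral_pos_iff_support_of_nonneg (fun x => (hw_pos x).le) hw, hsupp]
  simpa using NeZero.ne P

variable [TopologicalSpace Y] [FirstCountableTopology Y]

theorem continuous_integral_smul_of_abs_le {w : Y → X → ℝ} {g : X → E} {C : ℝ}
    (hw_meas : ∀ y, AEStronglyMeasurable (w y) P) (hw_cont : ∀ x, Continuous (w · x))
    (hw_le : ∀ y x, |w y x| ≤ C) (hg : Integrable g P) :
    Continuous fun y => ∫ x, w y x • g x ∂P :=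
  continuous_of_dominated (fun y => (hw_meas y).smul hg.aestronglyMeasurable)
    (fun y => Eventually.of_forall fun x => by
      rw [norm_smul, Real.norm_eq_abs]
      exact mul_le_mul_of_nonneg_right (hw_le y x) (norm_nonneg _))
    (hg.norm.const_mul C) (Eventually.of_forall fun x => (hw_cont x).smul continuous_const)

theorem continuous_integral_withDensity_normalized [IsFiniteMeasure P] [NeZero P]
    {w : Y → X → ℝ} {g : X → E} {C : ℝ} (hw_meas : ∀ y, Measurable (w y))
    (hw_cont : ∀ x, Continuous (w · x)) (hw_pos : ∀ y x, 0 < w y x) (hw_le : ∀ y x, w y x ≤ C)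
    (hg : Integrable g P) :
    Continuous fun y =>
      ∫ x, g x ∂P.withDensity fun x => ENNReal.ofReal (w y x / ∫ x', w y x' ∂P) := by
  have hw_abs : ∀ y x, |w y x| ≤ C := fun y x => by rw [abs_of_pos (hw_pos y x)]; exact hw_le y x
  have hw_int : ∀ y, Integrable (w y) P := fun y =>
    (integrable_const C).mono' (hw_meas y).aestronglyMeasurable
      (Eventually.of_forall fun x => by rw [Real.norm_eq_abs]; exact hw_abs y x)
  have hZ_pos : ∀ y, 0 < ∫ x, w y x ∂P := fun y => integral_pos_of_forall_pos_s8 (hw_int y) (hw_pos y)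
  have hZ_cont : Continuous fun y => ∫ x, w y x ∂P := by
    simpa only [smul_eq_mul, mul_one] using continuous_integral_smul_of_abs_le
      (fun y => (hw_meas y).aestronglyMeasurable) hw_cont hw_abs (integrable_const (1 : ℝ))
  have hmean : Continuous fun y => ∫ x, w y x • g x ∂P :=
    continuous_integral_smul_of_abs_le (fun y => (hw_meas y).aestronglyMeasurable) hw_cont hw_abs hg
  simp_rw [integral_withDensity_ofReal_div_s8 (hw_meas _) (fun x => (hw_pos _ x).le) (hZ_pos _).le]
  exact (hZ_cont.inv₀ fun y => (hZ_pos y).ne').smul hmean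

end WeightedIntegrals

theorem posterior_mean_wellposed_general
    (m d p : ℕ)
    (μθ : EuclideanSpace ℝ (Fin m) → EuclideanSpace ℝ (Fin d))
    (L : ℝ) (hL : 0 ≤ L)
    (hLip : ∀ z z', ‖μθ z - μθ z'‖ ≤ L * ‖z - z'‖)
    (A : EuclideanSpace ℝ (Fin d) →L[ℝ] EuclideanSpace ℝ (Fin p))
    (σ : ℝ) (hσ : 0 < σ)
    (Φ : EuclideanSpace ℝ (Fin m) → EuclideanSpace ℝ (Fin p) → ℝ)
    (hΦ : ∀ z y, Φ z y = ‖y - A (μθ z)‖ ^ 2 / (2 * σ ^ 2))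
    (Lik : EuclideanSpace ℝ (Fin p) → EuclideanSpace ℝ (Fin m) → ℝ)
    (hLik : ∀ y z, Lik y z = (2 * π * σ ^ 2) ^ (-(p : ℝ) / 2) * Real.exp (-(Φ z y)))
    (P : Measure (EuclideanSpace ℝ (Fin m))) [IsProbabilityMeasure P]
    (Z : EuclideanSpace ℝ (Fin p) → ℝ)
    (hZ : ∀ y, Z y = ∫ z, Lik y z ∂P)
    (post : EuclideanSpace ℝ (Fin p) → Measure (EuclideanSpace ℝ (Fin m)))
    (hpost : ∀ y, post y = P.withDensity (fun z => ENNReal.ofReal (Lik y z / Z y)))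
    (hmom : ∫⁻ z, (‖z‖₊ : ENNReal) ∂P < ⊤) :
    Continuous (fun y : EuclideanSpace ℝ (Fin p) => ∫ z, μθ z ∂(post y)) := by
  have hμθ : LipschitzWith ⟨L, hL⟩ μθ :=
    LipschitzWith.of_dist_le_mul fun z z' => by rw [dist_eq_norm, dist_eq_norm]; exact hLip z z'
  have hμθ_int : Integrable μθ P :=
    hμθ.integrable_of_integrable_id ⟨aestronglyMeasurable_id, hasFiniteIntegral_iff_enorm.2 hmom⟩
  set C := (2 * π * σ ^ 2) ^ (-(p : ℝ) / 2)
  have hC : 0 < C := by positivity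
  have hLik_eq : Lik = fun y z => C * Real.exp (-(‖y - A (μθ z)‖ ^ 2 / (2 * σ ^ 2))) := by
    ext y z; rw [hLik, hΦ]
  have hLik_cont : Continuous (Function.uncurry Lik) := by
    have := hμθ.continuous
    rw [hLik_eq]; fun_prop
  have hLik_le : ∀ y z, Lik y z ≤ C := fun y z => by
    rw [hLik_eq]
    exact mul_le_of_le_one_right hC.le (Real.exp_le_one_iff.2 (neg_nonpos.2 (by positivity)))
  have hpost_eq : post = fun y =>
      P.withDensity fun z => ENNReal.ofReal (Lik y z / ∫ z', Lik y z' ∂P) := by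
    ext1 y; rw [hpost, hZ]
  rw [hpost_eq]
  exact continuous_integral_withDensity_normalized
    (fun y => (hLik_cont.comp (Continuous.prodMk_right y)).measurable)
    (fun z => hLik_cont.comp (Continuous.prodMk_left z))
    (fun y z => by rw [hLik_eq]; positivity) hLik_le hμθ_int

/-- If the prior `P` has finite first moment, then the posterior mean of the
reconstructed image, `y ↦ ∫ μθ(z) dπ_y(z)`, is a continuous map from `ℝ^p` to `ℝ^d`. -/
theorem posterior_mean_wellposed
    (m d p : ℕ) (hm : 0 < m) (hd : 0 < d) (hp : 0 < p)
    (μθ : EuclideanSpace ℝ (Fin m) → EuclideanSpace ℝ (Fin d))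
    (L : ℝ) (hL : 0 ≤ L)
    (hLip : ∀ z z', ‖μθ z - μθ z'‖ ≤ L * ‖z - z'‖)
    (A : EuclideanSpace ℝ (Fin d) →L[ℝ] EuclideanSpace ℝ (Fin p))
    (σ : ℝ) (hσ : 0 < σ)
    (Φ : EuclideanSpace ℝ (Fin m) → EuclideanSpace ℝ (Fin p) → ℝ)
    (hΦ : ∀ z y, Φ z y = ‖y - A (μθ z)‖ ^ 2 / (2 * σ ^ 2))
    (Lik : EuclideanSpace ℝ (Fin p) → EuclideanSpace ℝ (Fin m) → ℝ)
    (hLik : ∀ y z, Lik y z = (2 * π * σ ^ 2) ^ (-(p : ℝ) / 2) * Real.exp (-(Φ z y)))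
    (P : Measure (EuclideanSpace ℝ (Fin m))) [IsProbabilityMeasure P]
    (Z : EuclideanSpace ℝ (Fin p) → ℝ)
    (hZ : ∀ y, Z y = ∫ z, Lik y z ∂P)
    (post : EuclideanSpace ℝ (Fin p) → Measure (EuclideanSpace ℝ (Fin m)))
    (hpost : ∀ y, post y = P.withDensity (fun z => ENNReal.ofReal (Lik y z / Z y)))
    (hmom : ∫⁻ z, (‖z‖₊ : ENNReal) ∂P < ⊤) :
    Continuous (fun y : EuclideanSpace ℝ (Fin p) => ∫ z, μθ z ∂(post y)) :=
  posterior_mean_wellposed_general m d p μθ L hL hLip A σ hσ Φ hΦ Lik hLik P Z hZ post hpost hmom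
end
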